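/- arXiv:2007.06047 — 2 statements merged into one kernel-verified Lean document; each statement's English description precedes it below -/
import Mathlib

section
/- Let A = U − V be a convergent regular splitting of A ∈ ℝ^{n×n} (i.e., U is invertible, U⁻¹ and V are entrywise nonnegative, and ρ(U⁻¹V) < 1) and let U = F − G be a convergent weak regular splitting of type II (i.e., F is invertible, F⁻¹ and G F⁻¹ are entrywise nonnegative, and ρ(F⁻¹G) < 1) such that V F⁻¹ G = G F⁻¹ V. Then for every integer s ≥ 1, the two-stage iteration matrix T_s satisfies ρ(T_s) < 1. -/
open Matrix Finset Filter

/-- A proper cone in `ℝ^n`: a closed, pointed, solid convex cone. -/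
def IsProperCone {n : ℕ} (K : Set (Fin n → ℝ)) : Prop :=
  IsClosed K ∧ Convex ℝ K ∧ (∀ c : ℝ, 0 ≤ c → ∀ x ∈ K, c • x ∈ K) ∧
    K ∩ (-K) = {0} ∧ (interior K).Nonempty

/-- `M ≥_K 0`: the matrix `M` leaves the cone `K` invariant. -/
def KNonneg {n : ℕ} (K : Set (Fin n → ℝ)) (M : Matrix (Fin n) (Fin n) ℝ) : Prop :=
  ∀ x ∈ K, M.mulVec x ∈ K

/-- Spectral radius: the supremum of the moduli of the complex eigenvalues. -/
noncomputable def specRad {n : ℕ} (M : Matrix (Fin n) (Fin n) ℝ) : ℝ :=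
  sSup ((fun z : ℂ => ‖z‖) '' spectrum ℂ (M.map Complex.ofReal))

/-- `A = U - V` is a `K`-regular splitting. -/
def KRegularSplitting {n : ℕ} (K : Set (Fin n → ℝ))
    (A U V : Matrix (Fin n) (Fin n) ℝ) : Prop :=
  A = U - V ∧ IsUnit U ∧ KNonneg K U⁻¹ ∧ KNonneg K V

/-- `A = U - V` is a `K`-weak regular splitting of type I. -/
def KWeakRegularSplittingI {n : ℕ} (K : Set (Fin n → ℝ))
    (A U V : Matrix (Fin n) (Fin n) ℝ) : Prop :=
  A = U - V ∧ IsUnit U ∧ KNonneg K U⁻¹ ∧ KNonneg K (U⁻¹ * V)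

/-- `A = U - V` is a `K`-weak regular splitting of type II. -/
def KWeakRegularSplittingII {n : ℕ} (K : Set (Fin n → ℝ))
    (A U V : Matrix (Fin n) (Fin n) ℝ) : Prop :=
  A = U - V ∧ IsUnit U ∧ KNonneg K U⁻¹ ∧ KNonneg K (V * U⁻¹)

/-- `A` is `K`-monotone: invertible with `A⁻¹ ≥_K 0`. -/
def KMonotone {n : ℕ} (K : Set (Fin n → ℝ)) (A : Matrix (Fin n) (Fin n) ℝ) : Prop :=
  IsUnit A ∧ KNonneg K A⁻¹

/-- Two-stage iteration matrix `T_s = (F⁻¹G)^s + Σ_{j=0}^{s-1} (F⁻¹G)^j F⁻¹ V`. -/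
noncomputable def twoStageT {n : ℕ} (F G V : Matrix (Fin n) (Fin n) ℝ) (s : ℕ) :
    Matrix (Fin n) (Fin n) ℝ :=
  (F⁻¹ * G) ^ s + (∑ j ∈ Finset.range s, (F⁻¹ * G) ^ j) * (F⁻¹ * V)

/-- `T̂_s = (GF⁻¹)^s + Σ_{j=0}^{s-1} (GF⁻¹)^j V F⁻¹`. -/
noncomputable def twoStageThat {n : ℕ} (F G V : Matrix (Fin n) (Fin n) ℝ) (s : ℕ) :
    Matrix (Fin n) (Fin n) ℝ :=
  (G * F⁻¹) ^ s + (∑ j ∈ Finset.range s, (G * F⁻¹) ^ j) * (V * F⁻¹)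

/-- `Q_s = Σ_{j=0}^{s-1} (F⁻¹G)^j F⁻¹`. -/
noncomputable def twoStageQ {n : ℕ} (F G : Matrix (Fin n) (Fin n) ℝ) (s : ℕ) :
    Matrix (Fin n) (Fin n) ℝ :=
  (∑ j ∈ Finset.range s, (F⁻¹ * G) ^ j) * F⁻¹

/-!
Conjugating by `F` turns `T_s` into `T̂_s = H^s + (∑_{j<s} H^j) V F⁻¹` with `H = G F⁻¹ ≥ 0`.
Since `U = (I - H) F`, the matrix `R = (I - H)⁻¹ V F⁻¹ ≥ 0` is similar to `U⁻¹ V`, and the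
geometric sum identity `(∑_{j<s} H^j)(I - H) = I - H^s` gives the factorization
`I - T̂_s = (I - H^s)(I - R)`. For a nonnegative `M` with `ρ(M) < 1` the Neumann series shows
that `(I - M)⁻¹` exists and is nonnegative; applied to `H^s` and `R` this makes `(I - T̂_s)⁻¹`
nonnegative. Finally, a nonnegative `T` with `(I - T)⁻¹ ≥ 0` has `ρ(T) < 1`: an eigenpair
`T v = μ v` gives `|μ| |v| ≤ T |v|`, and `|μ| ≥ 1` would force `|v| = (I - T)⁻¹ (I - T) |v| ≤ 0`.
-/

open Topology

namespace Matrix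

section EntrywiseNonneg

variable {l m n R : Type*} [Semiring R] [PartialOrder R] [IsOrderedRing R]

def EntrywiseNonneg (M : Matrix m n R) : Prop := ∀ i j, 0 ≤ M i j

namespace EntrywiseNonneg

theorem add {M N : Matrix m n R} (hM : M.EntrywiseNonneg) (hN : N.EntrywiseNonneg) :
    (M + N).EntrywiseNonneg :=
  fun i j => add_nonneg (hM i j) (hN i j)

theorem mul [Fintype m] {M : Matrix l m R} {N : Matrix m n R} (hM : M.EntrywiseNonneg)
    (hN : N.EntrywiseNonneg) : (M * N).EntrywiseNonneg :=
  fun i j => Finset.sum_nonneg fun k _ => mul_nonneg (hM i k) (hN k j)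

theorem one [DecidableEq n] : (1 : Matrix n n R).EntrywiseNonneg := fun i j => by
  rw [one_apply]
  split_ifs
  exacts [zero_le_one, le_rfl]

theorem pow [Fintype n] [DecidableEq n] {M : Matrix n n R} (hM : M.EntrywiseNonneg) (k : ℕ) :
    (M ^ k).EntrywiseNonneg := by
  induction k with
  | zero => exact one
  | succ k ih => exact pow_succ M k ▸ ih.mul hM

theorem sum {α : Type*} {s : Finset α} {f : α → Matrix m n R}
    (h : ∀ a ∈ s, (f a).EntrywiseNonneg) : (∑ a ∈ s, f a).EntrywiseNonneg := fun i j => by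
  rw [sum_apply]
  exact Finset.sum_nonneg fun a ha => h a ha i j

end EntrywiseNonneg

end EntrywiseNonneg

variable {ι : Type*} [Fintype ι]

-- `I - M^k = (I - M) ∑_{j<k} M^j`, and `det (I - M^k) → 1` is eventually nonzero.
theorem isUnit_one_sub_of_tendsto_pow [DecidableEq ι] {M : Matrix ι ι ℝ}
    (hM : Tendsto (M ^ ·) atTop (𝓝 0)) : IsUnit (1 - M) := by
  have h1 : Tendsto (fun k => 1 - M ^ k) atTop (𝓝 1) := by
    simpa using tendsto_const_nhds.sub hM
  have hdet : Tendsto (fun k => (1 - M ^ k).det) atTop (𝓝 1) := by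
    simpa [Function.comp_def] using (continuous_id.matrix_det.tendsto 1).comp h1
  obtain ⟨k, hk⟩ := (hdet.eventually_ne one_ne_zero).exists
  rw [← mul_neg_geom_sum, det_mul] at hk
  exact (isUnit_iff_isUnit_det _).2 (isUnit_iff_ne_zero.2 (left_ne_zero_of_mul hk))

theorem entrywiseNonneg_inv_one_sub [DecidableEq ι] {M : Matrix ι ι ℝ}
    (hM : M.EntrywiseNonneg) (hpow : Tendsto (M ^ ·) atTop (𝓝 0)) : (1 - M)⁻¹.EntrywiseNonneg := by
  have hdet := (isUnit_iff_isUnit_det _).1 (isUnit_one_sub_of_tendsto_pow hpow)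
  have hsum : ∀ k, ∑ j ∈ range k, M ^ j = (1 - M)⁻¹ * (1 - M ^ k) := fun k => by
    rw [← mul_neg_geom_sum, nonsing_inv_mul_cancel_left _ _ hdet]
  have hneumann : Tendsto (fun k => ∑ j ∈ range k, M ^ j) atTop (𝓝 (1 - M)⁻¹) := by
    simp_rw [hsum]
    simpa using (tendsto_const_nhds (x := (1 : Matrix ι ι ℝ)).sub hpow).const_mul (1 - M)⁻¹
  intro i j
  exact ge_of_tendsto ((hneumann.apply_nhds i).apply_nhds j)
    (Eventually.of_forall fun k => EntrywiseNonneg.sum (fun l _ => hM.pow l) i j)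

theorem eq_zero_of_le_mulVec [DecidableEq ι] {T : Matrix ι ι ℝ} (hT : IsUnit (1 - T))
    (hinv : (1 - T)⁻¹.EntrywiseNonneg) {x : ι → ℝ} (hx : 0 ≤ x) (hTx : x ≤ T *ᵥ x) : x = 0 := by
  have hdet := (isUnit_iff_isUnit_det _).1 hT
  have hy : (1 - T) *ᵥ x ≤ 0 := by
    rw [sub_mulVec, one_mulVec]
    exact sub_nonpos.2 hTx
  refine le_antisymm (fun i => ?_) hx
  rw [← one_mulVec x, ← nonsing_inv_mul _ hdet, ← mulVec_mulVec]
  exact Finset.sum_nonpos fun j _ => mul_nonpos_of_nonneg_of_nonpos (hinv i j) (hy j)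

theorem norm_smul_le_mulVec_norm {T : Matrix ι ι ℝ} (hT : T.EntrywiseNonneg) {μ : ℂ}
    {v : ι → ℂ} (hv : T.map Complex.ofReal *ᵥ v = μ • v) :
    ‖μ‖ • (fun i => ‖v i‖) ≤ T *ᵥ fun i => ‖v i‖ := fun i =>
  calc ‖μ‖ * ‖v i‖ = ‖∑ j, (T i j : ℂ) * v j‖ := by
        rw [← norm_mul, ← smul_eq_mul, ← Pi.smul_apply, ← hv]
        rfl
    _ ≤ ∑ j, T i j * ‖v j‖ := by
        refine (norm_sum_le _ _).trans_eq (Finset.sum_congr rfl fun j _ => ?_)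
        rw [norm_mul, Complex.norm_real, Real.norm_of_nonneg (hT i j)]

end Matrix

open Matrix

section SpectralRadius

variable {n : ℕ}

theorem specRad_lt_one_iff {M : Matrix (Fin n) (Fin n) ℝ} :
    specRad M < 1 ↔ ∀ μ ∈ spectrum ℂ (M.map Complex.ofReal), ‖μ‖ < 1 := by
  rcases (spectrum ℂ (M.map Complex.ofReal)).eq_empty_or_nonempty with h | h
  · simp [specRad, h]
  · rw [specRad, ((finite_spectrum _).image _).csSup_lt_iff (h.image _), Set.forall_mem_image]

theorem specRad_eq_of_semiconjBy {F M N : Matrix (Fin n) (Fin n) ℝ} (hF : IsUnit F)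
    (h : SemiconjBy F M N) : specRad M = specRad N := by
  obtain ⟨u, hu⟩ := hF.map (Complex.ofRealHom.mapMatrix (m := Fin n))
  have hconj : N.map Complex.ofReal = u.val * M.map Complex.ofReal * (u⁻¹).val :=
    (Units.eq_mul_inv_iff_mul_eq u).2 (hu ▸ h.map Complex.ofRealHom.mapMatrix).eq.symm
  rw [specRad, specRad, hconj, spectrum.units_conjugate]

theorem map_ofReal_pow (M : Matrix (Fin n) (Fin n) ℝ) (k : ℕ) :
    (M ^ k).map Complex.ofReal = M.map Complex.ofReal ^ k :=
  Matrix.map_pow M Complex.ofRealHom k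

theorem specRad_pow_lt_one {M : Matrix (Fin n) (Fin n) ℝ} (hM : specRad M < 1) {s : ℕ}
    (hs : 0 < s) : specRad (M ^ s) < 1 := by
  rw [specRad_lt_one_iff] at hM ⊢
  rw [map_ofReal_pow, spectrum.map_pow_of_pos _ hs]
  rintro _ ⟨μ, hμ, rfl⟩
  rw [norm_pow]
  exact pow_lt_one₀ (norm_nonneg _) (hM μ hμ) hs.ne'

theorem spectralRadius_map_ofReal_lt_one {M : Matrix (Fin n) (Fin n) ℝ} (hM : specRad M < 1) :
    spectralRadius ℂ (M.map Complex.ofReal) < 1 := by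
  refine (iSup₂_le fun μ hμ => ?_).trans_lt (ENNReal.ofReal_lt_one.2 hM)
  rw [← enorm_eq_nnnorm, ← ofReal_norm]
  exact ENNReal.ofReal_le_ofReal (le_csSup ((finite_spectrum _).image _).bddAbove ⟨μ, hμ, rfl⟩)

-- Gelfand's formula: eventually `‖a^k‖ ≤ r^k` for any `r` strictly between `ρ(a)` and `1`.
theorem tendsto_pow_atTop_nhds_zero_of_spectralRadius_lt_one {A : Type*} [NormedRing A]
    [NormedAlgebra ℂ A] [CompleteSpace A] {a : A} (h : spectralRadius ℂ a < 1) :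
    Tendsto (a ^ ·) atTop (𝓝 0) := by
  obtain ⟨r, hρr, hr1⟩ := ENNReal.lt_iff_exists_nnreal_btwn.mp h
  refine squeeze_zero_norm' ?_
    (tendsto_pow_atTop_nhds_zero_of_lt_one r.coe_nonneg (by exact_mod_cast hr1))
  filter_upwards [(spectrum.gelfand_formula a).eventually_lt_const hρr, eventually_ge_atTop 1]
    with k hk hk1
  have := ENNReal.rpow_le_rpow hk.le (z := k) (by positivity)
  rw [← ENNReal.rpow_mul, one_div_mul_cancel (by positivity), ENNReal.rpow_one,
    ENNReal.rpow_natCast] at this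
  exact_mod_cast this

theorem tendsto_pow_of_specRad_lt_one {M : Matrix (Fin n) (Fin n) ℝ} (hM : specRad M < 1) :
    Tendsto (M ^ ·) atTop (𝓝 0) := by
  have hC : Tendsto (M.map Complex.ofReal ^ ·) atTop (𝓝 0) := by
    let := Matrix.linftyOpNormedRing (n := Fin n) (α := ℂ)
    let := Matrix.linftyOpNormedAlgebra (n := Fin n) (α := ℂ) (R := ℂ)
    exact tendsto_pow_atTop_nhds_zero_of_spectralRadius_lt_one
      (spectralRadius_map_ofReal_lt_one hM)
  have hre : ∀ k, (M.map Complex.ofReal ^ k).map Complex.re = M ^ k := fun k => by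
    ext
    simp [← map_ofReal_pow]
  simpa [Function.comp_def, hre] using
    ((continuous_id.matrix_map Complex.continuous_re).tendsto 0).comp hC

theorem specRad_lt_one_of_inv_one_sub_nonneg {T : Matrix (Fin n) (Fin n) ℝ}
    (hT : T.EntrywiseNonneg) (hunit : IsUnit (1 - T)) (hinv : (1 - T)⁻¹.EntrywiseNonneg) :
    specRad T < 1 := by
  refine specRad_lt_one_iff.2 fun μ hμ => ?_
  rw [← spectrum_toLin', ← Module.End.hasEigenvalue_iff_mem_spectrum] at hμ
  obtain ⟨v, hv⟩ := hμ.exists_hasEigenvector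
  by_contra! h1
  have hzero := eq_zero_of_le_mulVec hunit hinv (x := fun i => ‖v i‖) (fun i => norm_nonneg _)
    fun i => (le_mul_of_one_le_left (norm_nonneg _) h1).trans
      (norm_smul_le_mulVec_norm hT (hv.apply_eq_smul) i)
  exact hv.2 (funext fun i => norm_eq_zero.1 (congrFun hzero i))

end SpectralRadius

theorem one_sub_pow_add_geom_sum_mul {R : Type*} [Ring R] {h p r : R} (hr : (1 - h) * r = p)
    (s : ℕ) : 1 - (h ^ s + (∑ j ∈ range s, h ^ j) * p) = (1 - h ^ s) * (1 - r) := by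
  rw [← hr, ← mul_assoc, geom_sum_mul_neg]
  noncomm_ring

theorem semiconjBy_inv_mul_mul_inv {n : ℕ} {F : Matrix (Fin n) (Fin n) ℝ} (hF : IsUnit F)
    (X : Matrix (Fin n) (Fin n) ℝ) : SemiconjBy F (F⁻¹ * X) (X * F⁻¹) := by
  have hdet := (isUnit_iff_isUnit_det F).1 hF
  rw [SemiconjBy, mul_nonsing_inv_cancel_left _ _ hdet, nonsing_inv_mul_cancel_right _ _ hdet]

theorem semiconjBy_twoStageT {n : ℕ} {F : Matrix (Fin n) (Fin n) ℝ} (hF : IsUnit F)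
    (G V : Matrix (Fin n) (Fin n) ℝ) (s : ℕ) :
    SemiconjBy F (twoStageT F G V s) (twoStageThat F G V s) := by
  have hconj := semiconjBy_inv_mul_mul_inv hF
  have hsum : SemiconjBy F (∑ j ∈ range s, (F⁻¹ * G) ^ j) (∑ j ∈ range s, (G * F⁻¹) ^ j) := by
    rw [SemiconjBy, mul_sum, sum_mul]
    exact sum_congr rfl fun j _ => ((hconj G).pow_right j).eq
  exact ((hconj G).pow_right s).add_right (hsum.mul_right (hconj V))

theorem stmt_7_general {n : ℕ} (U V F G : Matrix (Fin n) (Fin n) ℝ)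
    (hV : ∀ i j, 0 ≤ V i j)
    (houterconv : specRad (U⁻¹ * V) < 1)
    (hUFG : U = F - G) (hF : IsUnit F)
    (hFinv : ∀ i j, 0 ≤ F⁻¹ i j) (hGF : ∀ i j, 0 ≤ (G * F⁻¹) i j)
    (hinnerconv : specRad (F⁻¹ * G) < 1) :
    ∀ s : ℕ, 1 ≤ s → specRad (twoStageT F G V s) < 1 := by
  intro s hs
  have hdet := (isUnit_iff_isUnit_det F).1 hF
  set H := G * F⁻¹
  set R := (1 - H)⁻¹ * (V * F⁻¹)
  have hH : EntrywiseNonneg H := hGF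
  have hVF : EntrywiseNonneg (V * F⁻¹) := EntrywiseNonneg.mul hV hFinv
  have hU : U = (1 - H) * F := by
    rw [hUFG, sub_mul, one_mul, nonsing_inv_mul_cancel_right _ _ hdet]
  have hUR : SemiconjBy F (U⁻¹ * V) R := by
    simpa only [hU, Matrix.mul_inv_rev, mul_assoc, R] using
      semiconjBy_inv_mul_mul_inv hF ((1 - H)⁻¹ * V)
  have hHrad : specRad H < 1 :=
    specRad_eq_of_semiconjBy hF (semiconjBy_inv_mul_mul_inv hF G) ▸ hinnerconv
  have hHpow := tendsto_pow_of_specRad_lt_one hHrad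
  have hHspow := tendsto_pow_of_specRad_lt_one (specRad_pow_lt_one hHrad hs)
  have hRpow := tendsto_pow_of_specRad_lt_one (specRad_eq_of_semiconjBy hF hUR ▸ houterconv)
  have hIH := (isUnit_iff_isUnit_det _).1 (isUnit_one_sub_of_tendsto_pow hHpow)
  have hfac : 1 - twoStageThat F G V s = (1 - H ^ s) * (1 - R) :=
    one_sub_pow_add_geom_sum_mul (mul_nonsing_inv_cancel_left _ _ hIH) s
  rw [specRad_eq_of_semiconjBy hF (semiconjBy_twoStageT hF G V s)]
  refine specRad_lt_one_of_inv_one_sub_nonneg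
    ((hH.pow s).add ((EntrywiseNonneg.sum fun j _ => hH.pow j).mul hVF)) ?_ ?_
  · rw [hfac]
    exact (isUnit_one_sub_of_tendsto_pow hHspow).mul (isUnit_one_sub_of_tendsto_pow hRpow)
  · rw [hfac, Matrix.mul_inv_rev]
    exact (entrywiseNonneg_inv_one_sub ((entrywiseNonneg_inv_one_sub hH hHpow).mul hVF)
      hRpow).mul (entrywiseNonneg_inv_one_sub (hH.pow s) hHspow)

theorem stmt_7 {n : ℕ} (A U V F G : Matrix (Fin n) (Fin n) ℝ)
    (hAUV : A = U - V) (hU : IsUnit U)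
    (hUinv : ∀ i j, 0 ≤ U⁻¹ i j) (hV : ∀ i j, 0 ≤ V i j)
    (houterconv : specRad (U⁻¹ * V) < 1)
    (hUFG : U = F - G) (hF : IsUnit F)
    (hFinv : ∀ i j, 0 ≤ F⁻¹ i j) (hGF : ∀ i j, 0 ≤ (G * F⁻¹) i j)
    (hinnerconv : specRad (F⁻¹ * G) < 1)
    (hcomm : V * F⁻¹ * G = G * F⁻¹ * V) :
    ∀ s : ℕ, 1 ≤ s → specRad (twoStageT F G V s) < 1 :=
  stmt_7_general U V F G hV houterconv hUFG hF hFinv hGF hinnerconv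
end

section
/- Let A ∈ ℝ^{n×n} be K-monotone, let A = U − V be a K-regular splitting and U = F − G a K-weak regular splitting of type II with V F⁻¹ G = G F⁻¹ V, and let s ≥ 1 be an integer. Then I − T_s and I − T̂_s are invertible and (I − T̂_s)⁻¹ A = A (I − T_s)⁻¹; setting X = (I − T̂_s)⁻¹ A and Y = X − A, the splitting A = X − Y is a K-weak regular splitting of type II (X⁻¹ = F⁻¹ Σ_{j=0}^{s−1} (GF⁻¹)^j ≥_K 0 and Y X⁻¹ = T̂_s ≥_K 0), and it is the unique splitting induced by T̂_s: if A = X₁ − Y₁ with X₁ invertible and Y₁ X₁⁻¹ = T̂_s, then X₁ = X. -/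
open Matrix Finset Filter

open Topology

/-!
The powers of `N = G F⁻¹` tend to zero: for `v ∈ K` the sequence `U⁻¹ Nᵐ v` decreases in the
cone order, with decrements `F⁻¹ Nᵐ v ∈ K`, and is bounded below by `0`; it converges because
order intervals of a proper cone are compact, so `F⁻¹ Nᵐ v → 0`, and solidity of `K` extends this
to every `v`. Hence `1 - Nˢ`, and with it `Q = F⁻¹ ∑_{j<s} Nʲ`, is invertible. The identities
`Q A = 1 - T_s` and `A Q = 1 - T̂_s` (the latter because `V F⁻¹` commutes with `N`) identify
`X = Q⁻¹`; nonnegativity of `Q` and `T̂_s` is read off their defining sums.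
-/

namespace IsProperCone

variable {n : ℕ} {K : Set (Fin n → ℝ)}

lemma zero_mem (hK : IsProperCone K) : (0 : Fin n → ℝ) ∈ K :=
  (hK.2.2.2.1 ▸ Set.mem_singleton 0 : (0 : Fin n → ℝ) ∈ K ∩ -K).1

lemma add_mem (hK : IsProperCone K) {a b : Fin n → ℝ} (ha : a ∈ K) (hb : b ∈ K) :
    a + b ∈ K := by
  have hmid := hK.2.1 ha hb (by norm_num : (0 : ℝ) ≤ 1 / 2) (by norm_num : (0 : ℝ) ≤ 1 / 2)
    (by norm_num)
  convert hK.2.2.1 2 zero_le_two _ hmid using 1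
  rw [smul_add, smul_smul, smul_smul]
  norm_num

lemma eq_zero_of_mem_of_neg_mem (hK : IsProperCone K) {a : Fin n → ℝ} (ha : a ∈ K)
    (hna : -a ∈ K) : a = 0 := by
  have hmem : a ∈ K ∩ -K := ⟨ha, hna⟩
  rwa [hK.2.2.2.1] at hmem

/-- Normalising an unbounded sequence in `[0, c]` would produce a unit vector `u` with `±u ∈ K`. -/
lemma isBounded_orderInterval (hK : IsProperCone K) (c : Fin n → ℝ) :
    Bornology.IsBounded {v | v ∈ K ∧ c - v ∈ K} := by
  rw [isBounded_iff_forall_norm_le]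
  by_contra! hunbdd
  choose v hvB hv using fun j : ℕ => hunbdd j
  have hpos : ∀ j, 0 < ‖v j‖ := fun j => (Nat.cast_nonneg j).trans_lt (hv j)
  obtain ⟨u, hu, φ, hφ, hlim⟩ := (isCompact_sphere (0 : Fin n → ℝ) 1).tendsto_subseq
    (x := fun j => ‖v j‖⁻¹ • v j) fun j => by simp [norm_smul, (hpos j).ne']
  have hscale : Tendsto (fun i => ‖v (φ i)‖⁻¹) atTop (𝓝 0) :=
    tendsto_inv_atTop_zero.comp <| tendsto_atTop_mono
      (fun i => (Nat.cast_le.2 hφ.le_apply).trans (hv (φ i)).le) tendsto_natCast_atTop_atTop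
  have huK : u ∈ K := hK.1.mem_of_tendsto hlim <|
    Eventually.of_forall fun i => hK.2.2.1 _ (by positivity) _ (hvB (φ i)).1
  have hnegK : -u ∈ K := by
    have hlim' := (hscale.smul_const c).sub hlim
    rw [zero_smul, zero_sub] at hlim'
    refine hK.1.mem_of_tendsto hlim' (Eventually.of_forall fun i => ?_)
    simpa only [Function.comp_apply, smul_sub] using hK.2.2.1 _ (by positivity) _ (hvB (φ i)).2
  simp [hK.eq_zero_of_mem_of_neg_mem huK hnegK] at hu

/-- The order interval `[0, x 0]` is compact, and any two cluster points dominate each other. -/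
lemma exists_tendsto_of_antitone (hK : IsProperCone K) {x : ℕ → Fin n → ℝ}
    (hx : ∀ m, x m ∈ K) (hanti : ∀ m, x m - x (m + 1) ∈ K) :
    ∃ L, Tendsto x atTop (𝓝 L) := by
  have hle : ∀ k m, k ≤ m → x k - x m ∈ K := by
    intro k m hkm
    induction m, hkm using Nat.le_induction with
    | base => simpa using hK.zero_mem
    | succ m _ ih => simpa using hK.add_mem ih (hanti m)
  have hB : IsCompact {v | v ∈ K ∧ x 0 - v ∈ K} :=
    Metric.isCompact_of_isClosed_isBounded
      (hK.1.inter (hK.1.preimage (continuous_const.sub continuous_id)))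
      (hK.isBounded_orderInterval (x 0))
  have hxB : ∀ᶠ m in atTop, x m ∈ {v | v ∈ K ∧ x 0 - v ∈ K} :=
    Eventually.of_forall fun m => ⟨hx m, hle 0 m m.zero_le⟩
  have hbelow : ∀ L, MapClusterPt L atTop x → ∀ k, x k - L ∈ K := fun L hL k =>
    (hK.1.preimage (continuous_const.sub continuous_id)).mem_of_mapClusterPt hL
      ((eventually_ge_atTop k).mono fun m hm => hle k m hm)
  have habove : ∀ L L', MapClusterPt L atTop x → MapClusterPt L' atTop x → L - L' ∈ K :=
    fun L L' hL hL' => (hK.1.preimage (continuous_id.sub continuous_const)).mem_of_mapClusterPt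
      hL (Eventually.of_forall (hbelow L' hL'))
  obtain ⟨L, -, hL⟩ := hB.exists_mapClusterPt (tendsto_principal.2 hxB)
  refine ⟨L, hB.tendsto_nhds_of_unique_mapClusterPt hxB fun L' _ hL' => ?_⟩
  refine sub_eq_zero.1 (hK.eq_zero_of_mem_of_neg_mem (habove L' L hL' hL) ?_)
  simpa using habove L L' hL hL'

end IsProperCone

namespace KNonneg

variable {n : ℕ} {K : Set (Fin n → ℝ)} {M N : Matrix (Fin n) (Fin n) ℝ}

lemma one : KNonneg K (1 : Matrix (Fin n) (Fin n) ℝ) := fun x hx => by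
  rwa [one_mulVec]

lemma mul (hM : KNonneg K M) (hN : KNonneg K N) : KNonneg K (M * N) := fun x hx => by
  rw [← mulVec_mulVec]
  exact hM _ (hN x hx)

lemma pow (hM : KNonneg K M) (m : ℕ) : KNonneg K (M ^ m) := by
  induction m with
  | zero => simpa using one
  | succ m ih => simpa only [pow_succ] using ih.mul hM

lemma add (hK : IsProperCone K) (hM : KNonneg K M) (hN : KNonneg K N) :
    KNonneg K (M + N) := fun x hx => by
  rw [add_mulVec]
  exact hK.add_mem (hM x hx) (hN x hx)

lemma sum (hK : IsProperCone K) {ι : Type*} {s : Finset ι}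
    {f : ι → Matrix (Fin n) (Fin n) ℝ} (hf : ∀ j ∈ s, KNonneg K (f j)) :
    KNonneg K (∑ j ∈ s, f j) :=
  Finset.sum_induction f (KNonneg K) (fun _ _ hM hN => hM.add hK hN)
    (fun x _ => by simpa using hK.zero_mem) hf

end KNonneg

namespace Matrix

variable {m ι : Type*} [Fintype ι] [DecidableEq ι]

lemma tendsto_nhds_zero_of_tendsto_mulVec {K : Set (ι → ℝ)} (hK : (interior K).Nonempty)
    {M : ℕ → Matrix m ι ℝ} (hMK : ∀ v ∈ K, Tendsto (fun k => M k *ᵥ v) atTop (𝓝 0)) :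
    Tendsto M atTop (𝓝 0) := by
  let S : Submodule ℝ (ι → ℝ) :=
    { carrier := {v | Tendsto (fun k => M k *ᵥ v) atTop (𝓝 0)}
      add_mem' := fun ha hb => by simpa [mulVec_add] using ha.add hb
      zero_mem' := by simp
      smul_mem' := fun c v hv => by simpa [mulVec_smul] using hv.const_smul c }
  have hS : S = ⊤ := S.eq_top_of_nonempty_interior' (hK.mono (interior_mono hMK))
  refine tendsto_pi_nhds.2 fun i => tendsto_pi_nhds.2 fun j => ?_
  have hcol : Pi.single j 1 ∈ S := hS ▸ Submodule.mem_top
  simpa [mulVec_single_one] using tendsto_pi_nhds.1 hcol i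

lemma isUnit_one_sub_of_tendsto_pow_s9 {N : Matrix ι ι ℝ}
    (hN : Tendsto (fun k => N ^ k) atTop (𝓝 0)) : IsUnit (1 - N) := by
  rw [← mulVec_injective_iff_isUnit]
  intro x y hxy
  have hfix : N *ᵥ (x - y) = x - y := by
    rw [sub_mulVec, one_mulVec, sub_mulVec, one_mulVec] at hxy
    rw [mulVec_sub]
    linear_combination (norm := module) -hxy
  have hpow : ∀ k, N ^ k *ᵥ (x - y) = x - y := fun k => by
    induction k with
    | zero => simp
    | succ k ih => rw [pow_succ, ← mulVec_mulVec, hfix, ih]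
  have hlim : Tendsto (fun k => N ^ k *ᵥ (x - y)) atTop (𝓝 0) := by
    simpa [Function.comp_def] using
      ((continuous_id.matrix_mulVec continuous_const).tendsto 0).comp hN
  simp only [hpow] at hlim
  exact sub_eq_zero.1 (tendsto_nhds_unique tendsto_const_nhds hlim)

end Matrix

lemma KWeakRegularSplittingII.tendsto_pow_nhds_zero {n : ℕ} {K : Set (Fin n → ℝ)}
    (hK : IsProperCone K) {U F G : Matrix (Fin n) (Fin n) ℝ} (hU : KMonotone K U)
    (hsplit : KWeakRegularSplittingII K U F G) :
    Tendsto (fun m => (G * F⁻¹) ^ m) atTop (𝓝 0) := by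
  obtain ⟨hUFG, hF, hFi, hN⟩ := hsplit
  obtain ⟨hU, hUi⟩ := hU
  rw [isUnit_iff_isUnit_det] at hF hU
  have hdecr : ∀ m, U⁻¹ * (G * F⁻¹) ^ m - U⁻¹ * (G * F⁻¹) ^ (m + 1)
      = F⁻¹ * (G * F⁻¹) ^ m := fun m => by
    have hUF : U * F⁻¹ = 1 - G * F⁻¹ := by rw [hUFG, sub_mul, mul_nonsing_inv _ hF]
    rw [← mul_sub, pow_succ', ← one_sub_mul, ← hUF, mul_assoc,
      nonsing_inv_mul_cancel_left _ _ hU]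
  refine tendsto_nhds_zero_of_tendsto_mulVec hK.2.2.2.2 fun v hv => ?_
  obtain ⟨L, hL⟩ := hK.exists_tendsto_of_antitone (x := fun m => (U⁻¹ * (G * F⁻¹) ^ m) *ᵥ v)
    (fun m => hUi.mul (hN.pow m) v hv)
    (fun m => by rw [← sub_mulVec, hdecr]; exact hFi.mul (hN.pow m) v hv)
  have hstep : Tendsto (fun m => (F⁻¹ * (G * F⁻¹) ^ m) *ᵥ v) atTop (𝓝 0) := by
    have hdiff := hL.sub (hL.comp (tendsto_add_atTop_nat 1))
    rw [sub_self] at hdiff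
    exact hdiff.congr fun m => by rw [Function.comp_apply, ← sub_mulVec, hdecr]
  have hcont : Tendsto (F *ᵥ ·) (𝓝 0) (𝓝 0) :=
    (continuous_const.matrix_mulVec continuous_id).tendsto' 0 0 (mulVec_zero F)
  refine (hcont.comp hstep).congr fun m => ?_
  rw [Function.comp_apply, mulVec_mulVec, mul_nonsing_inv_cancel_left _ _ hF]

section InducedSplitting

variable {ι R : Type*} [Fintype ι] [DecidableEq ι] [CommRing R] {A T : Matrix ι ι R}

lemma inv_one_sub_mul_sub_self_mul_inv (hA : IsUnit A) (hT : IsUnit (1 - T)) :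
    ((1 - T)⁻¹ * A - A) * ((1 - T)⁻¹ * A)⁻¹ = T := by
  rw [isUnit_iff_isUnit_det] at hA hT
  rw [sub_mul, Matrix.mul_inv_rev, nonsing_inv_nonsing_inv _ hT, ← mul_assoc, mul_assoc _ A,
    mul_nonsing_inv _ hA, mul_one, nonsing_inv_mul _ hT, mul_nonsing_inv_cancel_left _ _ hA,
    sub_sub_cancel]

lemma eq_inv_mul_of_sub_mul_inv_eq {X Y : Matrix ι ι R} (hA : IsUnit A) (hX : IsUnit X)
    (hAXY : A = X - Y) (hYX : Y * X⁻¹ = T) : X = (1 - T)⁻¹ * A := by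
  rw [isUnit_iff_isUnit_det] at hA hX
  have hAX : 1 - T = A * X⁻¹ := by rw [← hYX, hAXY, sub_mul, mul_nonsing_inv _ hX]
  rw [hAX, Matrix.mul_inv_rev, nonsing_inv_nonsing_inv _ hX, nonsing_inv_mul_cancel_right _ _ hA]

end InducedSplitting

section TwoStage

variable {n : ℕ} (F G V : Matrix (Fin n) (Fin n) ℝ) (s : ℕ)

lemma twoStageQ_eq_inv_mul_sum : twoStageQ F G s = F⁻¹ * ∑ j ∈ range s, (G * F⁻¹) ^ j := by
  rw [twoStageQ, sum_mul, mul_sum]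
  exact sum_congr rfl fun j _ => mul_pow_mul _ _ _

lemma twoStageQ_mul_sub (hF : IsUnit F) :
    twoStageQ F G s * (F - G - V) = 1 - twoStageT F G V s := by
  rw [isUnit_iff_isUnit_det] at hF
  rw [twoStageQ, twoStageT, mul_sub, mul_assoc, mul_sub F⁻¹, nonsing_inv_mul _ hF,
    geom_sum_mul_neg, mul_assoc, sub_sub]

lemma sub_mul_twoStageQ (hF : IsUnit F) (hcomm : V * F⁻¹ * G = G * F⁻¹ * V) :
    (F - G - V) * twoStageQ F G s = 1 - twoStageThat F G V s := by
  rw [isUnit_iff_isUnit_det] at hF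
  have hVN : Commute (V * F⁻¹) (G * F⁻¹) := by
    rw [commute_iff_eq, ← mul_assoc, hcomm, mul_assoc]
  have hVS : Commute (V * F⁻¹) (∑ j ∈ range s, (G * F⁻¹) ^ j) :=
    Commute.sum_right _ _ _ fun j _ => hVN.pow_right j
  rw [twoStageQ_eq_inv_mul_sum, twoStageThat, sub_mul, ← mul_assoc, sub_mul F,
    mul_nonsing_inv _ hF, mul_neg_geom_sum, ← mul_assoc, hVS.eq, sub_sub]

lemma isUnit_twoStageQ (hF : IsUnit F) (hN : Tendsto (fun m => (G * F⁻¹) ^ m) atTop (𝓝 0))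
    (hs : 1 ≤ s) : IsUnit (twoStageQ F G s) := by
  have hNs : IsUnit (1 - (G * F⁻¹) ^ s) := by
    refine isUnit_one_sub_of_tendsto_pow_s9 ?_
    simpa only [Function.comp_def, ← pow_mul] using
      hN.comp (tendsto_atTop_mono (fun m => Nat.le_mul_of_pos_left m hs) tendsto_id)
  have hcomm : Commute (∑ j ∈ range s, (G * F⁻¹) ^ j) (1 - G * F⁻¹) :=
    (Commute.one_right _).sub_right (Commute.sum_left _ _ _ fun j _ => Commute.pow_left rfl j)
  rw [twoStageQ_eq_inv_mul_sum]
  exact (isUnit_nonsing_inv_iff.2 hF).mul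
    ((hcomm.isUnit_mul_iff.1 (geom_sum_mul_neg (G * F⁻¹) s ▸ hNs)).1)

variable {K : Set (Fin n → ℝ)}

lemma knonneg_twoStageQ (hK : IsProperCone K) (hFi : KNonneg K F⁻¹)
    (hN : KNonneg K (G * F⁻¹)) : KNonneg K (twoStageQ F G s) := by
  rw [twoStageQ_eq_inv_mul_sum, mul_sum]
  exact KNonneg.sum hK fun j _ => hFi.mul (hN.pow j)

lemma knonneg_twoStageThat (hK : IsProperCone K) (hFi : KNonneg K F⁻¹)
    (hN : KNonneg K (G * F⁻¹)) (hV : KNonneg K V) : KNonneg K (twoStageThat F G V s) := by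
  rw [twoStageThat, sum_mul]
  exact (hN.pow s).add hK (KNonneg.sum hK fun j _ => (hN.pow j).mul (hV.mul hFi))

end TwoStage

theorem stmt_9 {n : ℕ} (K : Set (Fin n → ℝ)) (hK : IsProperCone K)
    (A U V F G : Matrix (Fin n) (Fin n) ℝ)
    (hmono : KMonotone K A)
    (houter : KRegularSplitting K A U V)
    (hinner : KWeakRegularSplittingII K U F G)
    (hcomm : V * F⁻¹ * G = G * F⁻¹ * V) (s : ℕ) (hs : 1 ≤ s) :
    IsUnit (1 - twoStageT F G V s) ∧ IsUnit (1 - twoStageThat F G V s) ∧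
    (1 - twoStageThat F G V s)⁻¹ * A = A * (1 - twoStageT F G V s)⁻¹ ∧
    ((1 - twoStageThat F G V s)⁻¹ * A)⁻¹ = F⁻¹ * ∑ j ∈ Finset.range s, (G * F⁻¹) ^ j ∧
    KNonneg K (((1 - twoStageThat F G V s)⁻¹ * A)⁻¹) ∧
    ((1 - twoStageThat F G V s)⁻¹ * A - A) * ((1 - twoStageThat F G V s)⁻¹ * A)⁻¹ =
      twoStageThat F G V s ∧
    KNonneg K (twoStageThat F G V s) ∧
    KWeakRegularSplittingII K A ((1 - twoStageThat F G V s)⁻¹ * A)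
      ((1 - twoStageThat F G V s)⁻¹ * A - A) ∧
    (∀ X₁ Y₁ : Matrix (Fin n) (Fin n) ℝ, A = X₁ - Y₁ → IsUnit X₁ →
      Y₁ * X₁⁻¹ = twoStageThat F G V s → X₁ = (1 - twoStageThat F G V s)⁻¹ * A) := by
  obtain ⟨hA, -⟩ := hmono
  obtain ⟨rfl, hU, hUi, hV⟩ := houter
  have hpow := hinner.tendsto_pow_nhds_zero hK ⟨hU, hUi⟩
  obtain ⟨rfl, hF, hFi, hN⟩ := hinner
  have hQ := isUnit_twoStageQ F G s hF hpow hs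
  have hQA := twoStageQ_mul_sub F G V s hF
  have hAQ := sub_mul_twoStageQ F G V s hF hcomm
  have hT : IsUnit (1 - twoStageThat F G V s) := hAQ ▸ hA.mul hQ
  have hAd := (isUnit_iff_isUnit_det _).1 hA
  have hX : (1 - twoStageThat F G V s)⁻¹ * (F - G - V) = (twoStageQ F G s)⁻¹ := by
    rw [← hAQ, Matrix.mul_inv_rev, nonsing_inv_mul_cancel_right _ _ hAd]
  have hXinv : ((1 - twoStageThat F G V s)⁻¹ * (F - G - V))⁻¹ = twoStageQ F G s := by
    rw [hX, nonsing_inv_nonsing_inv _ ((isUnit_iff_isUnit_det _).1 hQ)]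
  have hQK := knonneg_twoStageQ F G s hK hFi hN
  have hTK := knonneg_twoStageThat F G V s hK hFi hN hV
  have hYX := inv_one_sub_mul_sub_self_mul_inv hA hT
  refine ⟨hQA ▸ hQ.mul hA, hT, ?_, hXinv.trans (twoStageQ_eq_inv_mul_sum F G s), hXinv ▸ hQK,
    hYX, hTK, ⟨(sub_sub_cancel _ _).symm, hX ▸ isUnit_nonsing_inv_iff.2 hQ, hXinv ▸ hQK,
    by rwa [hYX]⟩, fun X₁ Y₁ hAXY hX₁ hYX₁ => eq_inv_mul_of_sub_mul_inv_eq hA hX₁ hAXY hYX₁⟩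
  rw [hX, ← hQA, Matrix.mul_inv_rev, mul_nonsing_inv_cancel_left _ _ hAd]
end
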